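/- Let d, m ≥ 1 be integers, let I ⊂ ℝ^d be a finite set of collocation points with a designated point x₀ ∈ I, let h > 0, and let K ⊂ ℝ^d be a measurable set with Lebesgue measure vol(K) ≤ h^d. Let Λ ≥ 0 be a constant such that every vector-valued polynomial q : ℝ^d → ℝ^d whose components have total degree at most m satisfies ∫_K ‖q(x)‖² dx ≤ Λ² h^d Σ_{x∈I} ‖q(x)‖². Let g : ℝ^d → ℝ^d be any function, and let p be a vector-valued polynomial of componentwise total degree at most m with p(x₀) = g(x₀) that minimizes Σ_{x∈I} ‖q(x) − g(x)‖² among all such constrained polynomials q. Then (∫_K ‖p(x)‖² dx)^{1/2} ≤ (1 + 2Λ·√(#I)) · h^{d/2} · max_{x∈I} ‖g(x)‖, where #I is the number of collocation points and ‖·‖ is the Euclidean norm on ℝ^d. -/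

import Mathlib

/-!
Put `v = g x₀` and `r = p - v`. Every `p + t • r` satisfies the constraint, so minimality makes
`p - g` orthogonal to `p - v` in `ℓ²(I)`, and Pythagoras gives
`∑_I ‖p - v‖² ≤ ∑_I ‖g - v‖² ≤ 4 #I M²` with `M = max_I ‖g‖`. The stability hypothesis turns this
into `‖r‖_{L²(K)} ≤ 2 Λ √#I M h^{d/2}`, and Minkowski's inequality in `L²(K)` adds
`‖v‖_{L²(K)} ≤ M h^{d/2}`.
-/

open MeasureTheory

noncomputable def evalVec {d : ℕ} (q : Fin d → MvPolynomial (Fin d) ℝ)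
    (x : EuclideanSpace ℝ (Fin d)) : EuclideanSpace ℝ (Fin d) :=
  WithLp.toLp 2 (fun i => MvPolynomial.eval (fun j => x j) (q i))

open MvPolynomial

section LeastSquares

variable {ι E : Type*} [NormedAddCommGroup E] [InnerProductSpace ℝ E] {s : Finset ι} {u w : ι → E}

theorem Finset.sum_inner_eq_zero_of_forall_sum_norm_sq_le
    (h : ∀ t : ℝ, ∑ i ∈ s, ‖u i‖ ^ 2 ≤ ∑ i ∈ s, ‖u i + t • w i‖ ^ 2) :
    ∑ i ∈ s, inner ℝ (u i) (w i) = 0 := by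
  have hexpand (t : ℝ) : ∑ i ∈ s, ‖u i + t • w i‖ ^ 2 = ∑ i ∈ s, ‖u i‖ ^ 2
      + (2 * ∑ i ∈ s, inner ℝ (u i) (w i)) * t + (∑ i ∈ s, ‖w i‖ ^ 2) * (t * t) := by
    simp only [norm_add_sq_real, real_inner_smul_right, norm_smul, Real.norm_eq_abs, mul_pow,
      sq_abs, Finset.sum_add_distrib, Finset.mul_sum, Finset.sum_mul]
    congr 1; congr 1
    all_goals refine Finset.sum_congr rfl fun i _ => by ring
  have hdiscrim := discrim_le_zero (a := ∑ i ∈ s, ‖w i‖ ^ 2)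
    (b := 2 * ∑ i ∈ s, inner ℝ (u i) (w i)) (c := 0) fun t => by linarith [h t, hexpand t]
  rw [discrim, mul_zero, sub_zero] at hdiscrim
  nlinarith [sq_nonneg (2 * ∑ i ∈ s, inner ℝ (u i) (w i))]

theorem Finset.sum_norm_sq_le_sum_norm_sub_sq_of_sum_inner_eq_zero
    (h : ∑ i ∈ s, inner ℝ (u i) (w i) = 0) :
    ∑ i ∈ s, ‖w i‖ ^ 2 ≤ ∑ i ∈ s, ‖w i - u i‖ ^ 2 := by
  have hpythagoras : ∑ i ∈ s, ‖w i - u i‖ ^ 2 = ∑ i ∈ s, ‖w i‖ ^ 2 + ∑ i ∈ s, ‖u i‖ ^ 2 := by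
    simp only [norm_sub_sq_real, real_inner_comm (u _), Finset.sum_add_distrib,
      Finset.sum_sub_distrib, ← Finset.mul_sum, h]
    ring
  rw [hpythagoras]
  linarith [Finset.sum_nonneg fun i (_ : i ∈ s) => sq_nonneg ‖u i‖]

end LeastSquares

theorem Finset.sum_norm_sub_sq_le_card_mul {ι E : Type*} [SeminormedAddCommGroup E] {s : Finset ι}
    {f : ι → E} {v : E} {M : ℝ} (hf : ∀ i ∈ s, ‖f i‖ ≤ M) (hv : ‖v‖ ≤ M) :
    ∑ i ∈ s, ‖f i - v‖ ^ 2 ≤ s.card * (2 * M) ^ 2 := by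
  simpa using Finset.sum_le_card_nsmul s _ _ fun i hi => pow_le_pow_left₀ (norm_nonneg _)
    ((norm_sub_le _ _).trans (by linarith [hf i hi])) 2

section L2Minkowski

variable {α E : Type*} [MeasurableSpace α] [NormedAddCommGroup E] {μ : Measure α}

theorem MeasureTheory.MemLp.sqrt_integral_norm_sq_eq {f : α → E} (hf : MemLp f 2 μ) :
    √(∫ x, ‖f x‖ ^ 2 ∂μ) = (eLpNorm f 2 μ).toReal := by
  rw [hf.eLpNorm_eq_integral_rpow_norm two_ne_zero ENNReal.ofNat_ne_top,
    ENNReal.toReal_ofReal (by positivity), Real.sqrt_eq_rpow]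
  norm_num

theorem MeasureTheory.MemLp.sqrt_integral_norm_add_sq_le {f g : α → E} (hf : MemLp f 2 μ)
    (hg : MemLp g 2 μ) :
    √(∫ x, ‖f x + g x‖ ^ 2 ∂μ) ≤ √(∫ x, ‖f x‖ ^ 2 ∂μ) + √(∫ x, ‖g x‖ ^ 2 ∂μ) := by
  have hfg : MemLp (fun x => f x + g x) 2 μ := hf.add hg
  rw [hfg.sqrt_integral_norm_sq_eq, hf.sqrt_integral_norm_sq_eq,
    hg.sqrt_integral_norm_sq_eq, ← ENNReal.toReal_add hf.eLpNorm_ne_top hg.eLpNorm_ne_top]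
  exact ENNReal.toReal_mono (ENNReal.add_ne_top.mpr ⟨hf.eLpNorm_ne_top, hg.eLpNorm_ne_top⟩)
    (eLpNorm_add_le hf.1 hg.1 one_le_two)

theorem sqrt_integral_norm_sq_le_sqrt_integral_norm_sub_sq_add [IsFiniteMeasure μ] {f : α → E}
    (hf : AEStronglyMeasurable f μ) (v : E) :
    √(∫ x, ‖f x‖ ^ 2 ∂μ) ≤ √(∫ x, ‖f x - v‖ ^ 2 ∂μ) + ‖v‖ * √(μ.real Set.univ) := by
  by_cases hint : Integrable (fun x => ‖f x‖ ^ 2) μ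
  swap
  · rw [integral_undef hint, Real.sqrt_zero]
    positivity
  have hfv : MemLp (fun x => f x - v) 2 μ :=
    ((memLp_two_iff_integrable_sq_norm hf).mpr hint).sub (memLp_const v)
  simpa [mul_comm ‖v‖] using hfv.sqrt_integral_norm_add_sq_le (memLp_const v)

end L2Minkowski

section EvalVec

variable {d : ℕ}

theorem evalVec_add (q q' : Fin d → MvPolynomial (Fin d) ℝ) (x : EuclideanSpace ℝ (Fin d)) :
    evalVec (q + q') x = evalVec q x + evalVec q' x := by
  ext i; simp [evalVec]

theorem evalVec_sub (q q' : Fin d → MvPolynomial (Fin d) ℝ) (x : EuclideanSpace ℝ (Fin d)) :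
    evalVec (q - q') x = evalVec q x - evalVec q' x := by
  ext i; simp [evalVec]

theorem evalVec_smul (t : ℝ) (q : Fin d → MvPolynomial (Fin d) ℝ) (x : EuclideanSpace ℝ (Fin d)) :
    evalVec (t • q) x = t • evalVec q x := by
  ext i; simp [evalVec, smul_eval]

theorem evalVec_C (v x : EuclideanSpace ℝ (Fin d)) : evalVec (fun i => C (v i)) x = v := by
  ext i; simp [evalVec]

theorem continuous_evalVec (q : Fin d → MvPolynomial (Fin d) ℝ) : Continuous (evalVec q) :=
  (PiLp.continuous_toLp 2 _).comp <| continuous_pi fun i =>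
    (continuous_eval (q i)).comp <| continuous_pi fun j => by fun_prop

end EvalVec

theorem sum_norm_evalVec_sub_sq_le {d m : ℕ} {I : Finset (EuclideanSpace ℝ (Fin d))}
    {x₀ : EuclideanSpace ℝ (Fin d)} {g : EuclideanSpace ℝ (Fin d) → EuclideanSpace ℝ (Fin d)}
    {p : Fin d → MvPolynomial (Fin d) ℝ} (hpdeg : ∀ i, (p i).totalDegree ≤ m)
    (hpc : evalVec p x₀ = g x₀)
    (hpmin : ∀ q : Fin d → MvPolynomial (Fin d) ℝ, (∀ i, (q i).totalDegree ≤ m) →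
      evalVec q x₀ = g x₀ →
      ∑ x ∈ I, ‖evalVec p x - g x‖ ^ 2 ≤ ∑ x ∈ I, ‖evalVec q x - g x‖ ^ 2) :
    ∑ x ∈ I, ‖evalVec p x - g x₀‖ ^ 2 ≤ ∑ x ∈ I, ‖g x - g x₀‖ ^ 2 := by
  set r : Fin d → MvPolynomial (Fin d) ℝ := p - fun i => C (g x₀ i)
  have hr (x) : evalVec r x = evalVec p x - g x₀ := by rw [evalVec_sub, evalVec_C]
  have hcompete (t : ℝ) : ∑ x ∈ I, ‖evalVec p x - g x‖ ^ 2
      ≤ ∑ x ∈ I, ‖(evalVec p x - g x) + t • (evalVec p x - g x₀)‖ ^ 2 := by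
    have hdeg (i : Fin d) : ((p + t • r) i).totalDegree ≤ m := by
      have hp : p i ∈ restrictTotalDegree (Fin d) ℝ m :=
        (mem_restrictTotalDegree _ _ _).mpr (hpdeg i)
      have hC : C (g x₀ i) ∈ restrictTotalDegree (Fin d) ℝ m := by simp [mem_restrictTotalDegree]
      exact (mem_restrictTotalDegree _ _ _).mp
        (add_mem hp (Submodule.smul_mem _ t (sub_mem hp hC)))
    have heval (x) : evalVec (p + t • r) x = evalVec p x + t • (evalVec p x - g x₀) := by
      rw [evalVec_add, evalVec_smul, hr]
    convert hpmin _ hdeg (by rw [heval, hpc, sub_self, smul_zero, add_zero]) using 3 with x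
    rw [heval, sub_add_eq_add_sub]
  have horth := Finset.sum_inner_eq_zero_of_forall_sum_norm_sq_le hcompete
  simpa using Finset.sum_norm_sq_le_sum_norm_sub_sq_of_sum_inner_eq_zero horth

theorem stmt_3_general {d m : ℕ}
    (I : Finset (EuclideanSpace ℝ (Fin d)))
    (x₀ : EuclideanSpace ℝ (Fin d)) (hx₀ : x₀ ∈ I)
    (h : ℝ) (hh : 0 < h)
    (K : Set (EuclideanSpace ℝ (Fin d)))
    (hvol : volume K ≤ ENNReal.ofReal (h ^ d))
    (Λ : ℝ) (hΛ : 0 ≤ Λ)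
    (hstab : ∀ q : Fin d → MvPolynomial (Fin d) ℝ, (∀ i, (q i).totalDegree ≤ m) →
      ∫ x in K, ‖evalVec q x‖ ^ 2 ≤ Λ ^ 2 * h ^ d * ∑ x ∈ I, ‖evalVec q x‖ ^ 2)
    (g : EuclideanSpace ℝ (Fin d) → EuclideanSpace ℝ (Fin d))
    (p : Fin d → MvPolynomial (Fin d) ℝ)
    (hpdeg : ∀ i, (p i).totalDegree ≤ m)
    (hpc : evalVec p x₀ = g x₀)
    (hpmin : ∀ q : Fin d → MvPolynomial (Fin d) ℝ, (∀ i, (q i).totalDegree ≤ m) →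
      evalVec q x₀ = g x₀ →
      ∑ x ∈ I, ‖evalVec p x - g x‖ ^ 2 ≤ ∑ x ∈ I, ‖evalVec q x - g x‖ ^ 2) :
    (∫ x in K, ‖evalVec p x‖ ^ 2) ^ (1 / 2 : ℝ) ≤
      (1 + 2 * Λ * Real.sqrt (I.card : ℝ)) * h ^ ((d : ℝ) / 2) *
        I.sup' ⟨x₀, hx₀⟩ (fun x => ‖g x‖) := by
  set M := I.sup' ⟨x₀, hx₀⟩ (fun x => ‖g x‖)
  have hgM (x) (hx : x ∈ I) : ‖g x‖ ≤ M := I.le_sup' (fun y => ‖g y‖) hx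
  have hM : 0 ≤ M := (norm_nonneg _).trans (hgM x₀ hx₀)
  set r : Fin d → MvPolynomial (Fin d) ℝ := p - fun i => C (g x₀ i)
  have hr (x) : evalVec r x = evalVec p x - g x₀ := by rw [evalVec_sub, evalVec_C]
  have hr_L2 : √(∫ x in K, ‖evalVec r x‖ ^ 2) ≤ Λ * √(h ^ d) * (√I.card * (2 * M)) := by
    have hsum : ∑ x ∈ I, ‖evalVec r x‖ ^ 2 ≤ I.card * (2 * M) ^ 2 := by
      simpa only [hr] using (sum_norm_evalVec_sub_sq_le hpdeg hpc hpmin).trans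
        (Finset.sum_norm_sub_sq_le_card_mul hgM (hgM x₀ hx₀))
    have hrdeg (i : Fin d) : (r i).totalDegree ≤ m :=
      (totalDegree_sub _ _).trans (by simpa using hpdeg i)
    rw [Real.sqrt_le_left (by positivity)]
    calc ∫ x in K, ‖evalVec r x‖ ^ 2 ≤ Λ ^ 2 * h ^ d * (I.card * (2 * M) ^ 2) :=
          (hstab r hrdeg).trans (by gcongr)
      _ = (Λ * √(h ^ d) * (√I.card * (2 * M))) ^ 2 := by
        simp only [mul_pow, Real.sq_sqrt (pow_nonneg hh.le d), Real.sq_sqrt I.card.cast_nonneg]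
  have : IsFiniteMeasure (volume.restrict K) :=
    isFiniteMeasure_restrict.mpr (ne_top_of_le_ne_top ENNReal.ofReal_ne_top hvol)
  have hvolK : volume.real K ≤ h ^ d := ENNReal.toReal_le_of_le_ofReal (by positivity) hvol
  have hpow : h ^ ((d : ℝ) / 2) = √(h ^ d) := by
    rw [Real.sqrt_eq_rpow, ← Real.rpow_natCast, ← Real.rpow_mul hh.le]; ring_nf
  rw [← Real.sqrt_eq_rpow, hpow]
  calc √(∫ x in K, ‖evalVec p x‖ ^ 2)
      ≤ √(∫ x in K, ‖evalVec r x‖ ^ 2) + ‖g x₀‖ * √(volume.real K) := by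
        simpa [hr] using sqrt_integral_norm_sq_le_sqrt_integral_norm_sub_sq_add
          (μ := volume.restrict K) (continuous_evalVec p).aestronglyMeasurable (g x₀)
    _ ≤ Λ * √(h ^ d) * (√I.card * (2 * M)) + M * √(h ^ d) := by
      gcongr
      exact hgM x₀ hx₀
    _ = _ := by ring

/-- Lemma 3.2 (stability of the reconstruction): the constrained least-squares
fit `p` of `g` on the collocation points `I` satisfies
`‖p‖_{L²(K)} ≤ (1 + 2Λ√(#I)) h^{d/2} max_{x∈I} ‖g(x)‖`. -/
theorem stmt_3 {d m : ℕ} (hd : 1 ≤ d) (hm : 1 ≤ m)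
    (I : Finset (EuclideanSpace ℝ (Fin d)))
    (x₀ : EuclideanSpace ℝ (Fin d)) (hx₀ : x₀ ∈ I)
    (h : ℝ) (hh : 0 < h)
    (K : Set (EuclideanSpace ℝ (Fin d))) (hK : MeasurableSet K)
    (hvol : volume K ≤ ENNReal.ofReal (h ^ d))
    (Λ : ℝ) (hΛ : 0 ≤ Λ)
    (hstab : ∀ q : Fin d → MvPolynomial (Fin d) ℝ, (∀ i, (q i).totalDegree ≤ m) →
      ∫ x in K, ‖evalVec q x‖ ^ 2 ≤ Λ ^ 2 * h ^ d * ∑ x ∈ I, ‖evalVec q x‖ ^ 2)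
    (g : EuclideanSpace ℝ (Fin d) → EuclideanSpace ℝ (Fin d))
    (p : Fin d → MvPolynomial (Fin d) ℝ)
    (hpdeg : ∀ i, (p i).totalDegree ≤ m)
    (hpc : evalVec p x₀ = g x₀)
    (hpmin : ∀ q : Fin d → MvPolynomial (Fin d) ℝ, (∀ i, (q i).totalDegree ≤ m) →
      evalVec q x₀ = g x₀ →
      ∑ x ∈ I, ‖evalVec p x - g x‖ ^ 2 ≤ ∑ x ∈ I, ‖evalVec q x - g x‖ ^ 2) :
    (∫ x in K, ‖evalVec p x‖ ^ 2) ^ (1 / 2 : ℝ) ≤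
      (1 + 2 * Λ * Real.sqrt (I.card : ℝ)) * h ^ ((d : ℝ) / 2) *
        I.sup' ⟨x₀, hx₀⟩ (fun x => ‖g x‖) :=
  stmt_3_general I x₀ hx₀ h hh K hvol Λ hΛ hstab g p hpdeg hpc hpmin
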